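/- arXiv:1801.04381 — 3 statements merged into one kernel-verified Lean document; each statement's English description precedes it below -/
import Mathlib

section
/- (Invertibility of ReLU, uniqueness direction) Let B be an m × n real matrix, x₀ ∈ ℝⁿ, and y₀ = ReLU(B x₀). Let T ⊆ {1,…,m} be the set of indices i with (y₀)_i ≠ 0. If the rows of B indexed by T span ℝⁿ (i.e., the restricted matrix B_T has rank n), then x₀ is the unique solution of the equation y₀ = ReLU(B x). -/
/-!
Where `y₀ i ≠ 0`, ReLU acts as the identity, so any solution `x` satisfies `(B x) i = (B x₀) i`
on the support of `y₀`: the difference `x - x₀` is orthogonal to the rows `B i` indexed by it.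
These rows span `ℝⁿ`, so `x - x₀ = 0`.
-/

noncomputable def relu {m : ℕ} (y : Fin m → ℝ) : Fin m → ℝ := fun i => max 0 (y i)

theorem relu_apply_of_ne_zero {m : ℕ} {y : Fin m → ℝ} {i : Fin m} (h : relu y i ≠ 0) :
    relu y i = y i :=
  max_eq_right <| le_of_not_gt fun hneg => h (max_eq_left hneg.le)

theorem apply_eq_of_relu_eq {m : ℕ} {y y' : Fin m → ℝ} (h : relu y = relu y') {i : Fin m}
    (hi : relu y i ≠ 0) : y i = y' i :=
  calc y i = relu y i := (relu_apply_of_ne_zero hi).symm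
    _ = relu y' i := congrFun h i
    _ = y' i := relu_apply_of_ne_zero (congrFun h i ▸ hi)

theorem eq_zero_of_dotProduct_eq_zero_of_span_eq_top {R n : Type*} [CommSemiring R] [Fintype n]
    {s : Set (n → R)} (hs : Submodule.span R s = ⊤) {v : n → R} (hv : ∀ w ∈ s, v ⬝ᵥ w = 0) :
    v = 0 :=
  have hv' : dotProductBilin R R v = 0 := LinearMap.ext_on hs hv
  dotProduct_eq_zero v fun w => LinearMap.congr_fun hv' w

/-- Invertibility of ReLU, uniqueness direction: if the rows of `B` indexed by the
support `T` of `y₀ = relu (B x₀)` span `ℝⁿ`, then `x₀` is the unique solution of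
`relu (B x) = y₀`. -/
theorem relu_unique_solution {m n : ℕ} (B : Matrix (Fin m) (Fin n) ℝ) (x₀ : Fin n → ℝ)
    (y₀ : Fin m → ℝ) (hy₀ : y₀ = relu (B.mulVec x₀))
    (hspan : Submodule.span ℝ {r : Fin n → ℝ | ∃ i, y₀ i ≠ 0 ∧ r = B i} = ⊤) :
    ∀ x : Fin n → ℝ, relu (B.mulVec x) = y₀ → x = x₀ := by
  intro x hx
  refine sub_eq_zero.mp (eq_zero_of_dotProduct_eq_zero_of_span_eq_top hspan ?_)
  rintro _ ⟨i, hi, rfl⟩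
  rw [dotProduct_comm, dotProduct_sub, sub_eq_zero]
  exact apply_eq_of_relu_eq (hx.trans hy₀) (hx ▸ hi)
end

section
/- (Invertibility of ReLU, non-uniqueness direction) Let B be an m × n real matrix, x₀ ∈ ℝⁿ, and y₀ = ReLU(B x₀). Let T be the set of indices where y₀ is nonzero. If the rows of B indexed by T do not span ℝⁿ, and moreover B x₀ has all coordinates strictly positive outside T negated (precisely: (Bx₀)_i < 0 for all i ∉ T), then there exist infinitely many x ∈ ℝⁿ with ReLU(B x) = y₀. -/
/-!
A nonzero `v` orthogonal to the rows `B i` with `i ∈ T` exists because these rows do not span.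
Along the line `t ↦ x₀ + t • v` the coordinates of `B x` indexed by `T` are constant, while those
outside `T` start strictly negative and so stay negative for small `t`; hence `relu (B x) = y₀`
on a whole segment of that line.
-/

open Filter Topology Matrix

theorem Submodule.exists_ne_zero_forall_dotProduct_eq_zero_of_span_ne_top {K ι : Type*}
    [Field K] [Fintype ι] {s : Set (ι → K)} (hs : Submodule.span K s ≠ ⊤) :
    ∃ v ≠ 0, ∀ r ∈ s, r ⬝ᵥ v = 0 := by
  classical
  obtain ⟨f, hf0, hfs⟩ := Submodule.exists_dual_map_eq_bot_of_lt_top hs.lt_top inferInstance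
  refine ⟨(dotProductEquiv K ι).symm f, by simpa using hf0, fun r hr => ?_⟩
  have hfr : f r ∈ (Submodule.span K s).map f :=
    Submodule.mem_map_of_mem (Submodule.subset_span hr)
  rw [hfs, Submodule.mem_bot] at hfr
  rw [dotProduct_comm, ← dotProductEquiv_apply_apply, LinearEquiv.apply_symm_apply, hfr]

theorem Set.infinite_of_eventually_add_smul_mem {𝕜 E : Type*} [NontriviallyNormedField 𝕜]
    [AddCommGroup E] [Module 𝕜 E] {s : Set E} {x v : E} (hv : v ≠ 0)
    (h : ∀ᶠ t in 𝓝 (0 : 𝕜), x + t • v ∈ s) : s.Infinite := by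
  have hinj : Function.Injective fun t : 𝕜 => x + t • v :=
    (add_right_injective x).comp (smul_left_injective 𝕜 hv)
  exact ((infinite_of_mem_nhds 0 h).image hinj.injOn).mono (Set.image_preimage_subset _ _)

theorem Matrix.mulVec_add_smul_apply {R m n : Type*} [CommSemiring R] [Fintype n]
    (B : Matrix m n R) (x v : n → R) (t : R) (i : m) :
    (B *ᵥ (x + t • v)) i = (B *ᵥ x) i + t * (B i ⬝ᵥ v) := by
  simp only [mulVec_add, mulVec_smul, Pi.add_apply, Pi.smul_apply, smul_eq_mul]
  rfl

theorem eventually_relu_mulVec_add_smul_eq {m : ℕ} {n : Type*} [Fintype n]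
    (B : Matrix (Fin m) n ℝ) (x v : n → ℝ) (h : ∀ i, B i ⬝ᵥ v = 0 ∨ (B *ᵥ x) i < 0) :
    ∀ᶠ t in 𝓝 (0 : ℝ), relu (B *ᵥ (x + t • v)) = relu (B *ᵥ x) := by
  have hcoord : ∀ i, ∀ᶠ t in 𝓝 (0 : ℝ),
      max 0 ((B *ᵥ (x + t • v)) i) = max 0 ((B *ᵥ x) i) := by
    intro i
    simp only [mulVec_add_smul_apply]
    rcases h i with horth | hneg
    · simp [horth]
    · have hcont : Continuous fun t : ℝ => (B *ᵥ x) i + t * (B i ⬝ᵥ v) := by fun_prop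
      filter_upwards [hcont.continuousAt.eventually_lt continuousAt_const (by simpa using hneg)]
        with t ht
      rw [max_eq_left ht.le, max_eq_left hneg.le]
  filter_upwards [eventually_all.2 hcoord] with t ht
  exact funext ht

/-- Invertibility of ReLU, non-uniqueness direction: if the rows of `B` indexed by
the support `T` of `y₀ = relu (B x₀)` do not span `ℝⁿ`, and `(B x₀) i < 0` for all
`i ∉ T`, then there are infinitely many solutions of `relu (B x) = y₀`. -/
theorem relu_infinitely_many_solutions {m n : ℕ} (B : Matrix (Fin m) (Fin n) ℝ)
    (x₀ : Fin n → ℝ) (y₀ : Fin m → ℝ) (hy₀ : y₀ = relu (B.mulVec x₀))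
    (hspan : Submodule.span ℝ {r : Fin n → ℝ | ∃ i, y₀ i ≠ 0 ∧ r = B i} ≠ ⊤)
    (hneg : ∀ i, y₀ i = 0 → B.mulVec x₀ i < 0) :
    {x : Fin n → ℝ | relu (B.mulVec x) = y₀}.Infinite := by
  obtain ⟨v, hv0, hv⟩ := Submodule.exists_ne_zero_forall_dotProduct_eq_zero_of_span_ne_top hspan
  have hrows : ∀ i, B i ⬝ᵥ v = 0 ∨ (B *ᵥ x₀) i < 0 := by
    intro i
    by_cases hi : y₀ i = 0
    · exact .inr (hneg i hi)
    · exact .inl (hv _ ⟨i, hi, rfl⟩)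
  subst hy₀
  exact Set.infinite_of_eventually_add_smul_mem hv0
    (eventually_relu_mulVec_add_smul_eq B x₀ v hrows)
end

section
/- Let y₀ = ReLU(Bx₀). If the number of nonzero coordinates of y₀ is strictly less than n and (Bx₀)_i < 0 for every zero coordinate i of y₀, then the solution x of y₀ = ReLU(Bx) is not unique. -/
open Finset

/-- If `y₀ = relu (B x₀)` has strictly fewer than `n` nonzero coordinates, and
`(B x₀) i < 0` at every zero coordinate `i` of `y₀`, then the solution of
`relu (B x) = y₀` is not unique. -/
theorem relu_not_unique_of_few_nonzero {m n : ℕ} (B : Matrix (Fin m) (Fin n) ℝ)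
    (x₀ : Fin n → ℝ) (y₀ : Fin m → ℝ) (hy₀ : y₀ = relu (B.mulVec x₀))
    (hcard : (Finset.univ.filter (fun i => y₀ i ≠ 0)).card < n)
    (hneg : ∀ i, y₀ i = 0 → B.mulVec x₀ i < 0) :
    ∃ x : Fin n → ℝ, x ≠ x₀ ∧ relu (B.mulVec x) = y₀ := by
  classical
  set S := Finset.univ.filter (fun i => y₀ i ≠ 0) with hS
  -- linear map to coordinates in S
  let f : (Fin n → ℝ) →ₗ[ℝ] (S → ℝ) :=
    { toFun := fun x i => B.mulVec x i
      map_add' := by intro a b; funext i; simp [Matrix.mulVec_add]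
      map_smul' := by intro c a; funext i; simp [Matrix.mulVec_smul] }
  have hnotinj : ¬ Function.Injective f := by
    intro hinj
    have := LinearMap.finrank_le_finrank_of_injective hinj
    simp only [Module.finrank_fintype_fun_eq_card, Fintype.card_coe, Fintype.card_fin] at this
    omega
  have : ∃ z : Fin n → ℝ, z ≠ 0 ∧ f z = 0 := by
    rw [← LinearMap.ker_eq_bot] at hnotinj
    rcases Submodule.exists_mem_ne_zero_of_ne_bot hnotinj with ⟨z, hz, hz0⟩
    exact ⟨z, hz0, hz⟩
  obtain ⟨z, hz0, hfz⟩ := this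
  have hfz' : ∀ i : Fin m, y₀ i ≠ 0 → B.mulVec z i = 0 := by
    intro i hi
    have := congrFun hfz ⟨i, by simp [hS, hi]⟩
    simpa [f] using this
  -- choose ε > 0 small enough
  have hex : ∃ ε : ℝ, 0 < ε ∧ ∀ i, y₀ i = 0 → B.mulVec x₀ i + ε * B.mulVec z i < 0 := by
    by_cases hT : (Finset.univ.filter (fun i => y₀ i = 0)).Nonempty
    · set T := Finset.univ.filter (fun i => y₀ i = 0) with hTdef
      set ε := T.inf' hT (fun i => (-(B.mulVec x₀ i)) / (|B.mulVec z i| + 1)) with hε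
      refine ⟨ε, ?_, ?_⟩
      · rw [hε, Finset.lt_inf'_iff]
        intro i hi
        have hi0 : y₀ i = 0 := by simpa [hTdef] using hi
        have := hneg i hi0
        have h1 : (0:ℝ) < |B.mulVec z i| + 1 := by positivity
        exact div_pos (by linarith) h1
      · intro i hi0
        have hmem : i ∈ T := by simp [hTdef, hi0]
        have hεle : ε ≤ (-(B.mulVec x₀ i)) / (|B.mulVec z i| + 1) :=
          Finset.inf'_le _ hmem
        have hεpos : 0 < ε := by
          rw [hε, Finset.lt_inf'_iff]
          intro j hj
          have hj0 : y₀ j = 0 := by simpa [hTdef] using hj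
          have := hneg j hj0
          have h1 : (0:ℝ) < |B.mulVec z j| + 1 := by positivity
          exact div_pos (by linarith) h1
        have h1 : (0:ℝ) < |B.mulVec z i| + 1 := by positivity
        have h2 : ε * (|B.mulVec z i| + 1) ≤ -(B.mulVec x₀ i) := by
          rw [le_div_iff₀ h1] at hεle; linarith
        have h3 : ε * B.mulVec z i ≤ ε * |B.mulVec z i| :=
          mul_le_mul_of_nonneg_left (le_abs_self _) hεpos.le
        nlinarith
    · refine ⟨1, one_pos, fun i hi0 => absurd ?_ hT⟩
      exact ⟨i, Finset.mem_filter.mpr ⟨Finset.mem_univ i, hi0⟩⟩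
  obtain ⟨ε, hεpos, hεsmall⟩ := hex
  refine ⟨x₀ + ε • z, ?_, ?_⟩
  · intro h
    apply hz0
    have : ε • z = 0 := by
      have := congrArg (· - x₀) h
      simpa [add_sub_cancel_left] using this
    have := smul_eq_zero.mp this
    rcases this with h | h
    · exact absurd h hεpos.ne'
    · exact h
  · funext i
    have hBv : B.mulVec (x₀ + ε • z) i = B.mulVec x₀ i + ε * B.mulVec z i := by
      simp [Matrix.mulVec_add, Matrix.mulVec_smul, smul_eq_mul]
    by_cases hi : y₀ i = 0
    · have := hεsmall i hi
      simp [relu, hBv, hi, max_eq_left (le_of_lt this)]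
    · have hz' : B.mulVec z i = 0 := hfz' i hi
      have hy : y₀ i = max 0 (B.mulVec x₀ i) := by rw [hy₀]; rfl
      simp [relu, hBv, hz', ← hy]
end
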